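/- arXiv:2405.02921 — 3 statements merged into one kernel-verified Lean document; each statement's English description precedes it below -/
import Mathlib

section
/- Let A be an Artin algebra and T₁, T₂ finitely generated A-modules. For positive integers m, n, every module of the form X ⊕ Y with X ∈ [T₁]_m and Y ∈ [T₂]_n lies in [T₁ ⊕ T₂]_{max(m,n)}. -/
open CategoryTheory

universe u

namespace Paper

variable (A : Type u) [Ring A]

/-- A short exact sequence `0 → X → Y → Z → 0` of `A`-modules. -/
def SES (X Y Z : ModuleCat.{u} A) : Prop :=
  ∃ (f : X →ₗ[A] Y) (g : Y →ₗ[A] Z),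
    Function.Injective f ∧ Function.Surjective g ∧ LinearMap.range f = LinearMap.ker g

/-- `M` is a direct summand of `X`. -/
def IsSummand (M X : ModuleCat.{u} A) : Prop :=
  ∃ (i : M →ₗ[A] X) (r : X →ₗ[A] M), r.comp i = LinearMap.id

/-- The additive closure `add 𝒯`: direct summands of finite direct sums of objects of `𝒯`. -/
def addClosure (T : Set (ModuleCat.{u} A)) : Set (ModuleCat.{u} A) :=
  { M | ∃ (n : ℕ) (f : Fin n → ModuleCat.{u} A), (∀ j, f j ∈ T) ∧
      IsSummand A M (ModuleCat.of A (∀ j, (f j : Type u))) }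

/-- The extension product `𝒞 • 𝒟`: (summands of) extensions of a module of `𝒟`
by a module of `𝒞`. -/
def bullet (C D : Set (ModuleCat.{u} A)) : Set (ModuleCat.{u} A) :=
  addClosure A { X | ∃ C' ∈ C, ∃ D' ∈ D, SES A C' X D' }

/-- `[𝒯]ₙ`, defined by `[𝒯]₀ = {0}`, `[𝒯]₁ = add 𝒯` and `[𝒯]ₙ = [𝒯]₁ • [𝒯]ₙ₋₁`. -/
def bracket (T : Set (ModuleCat.{u} A)) : ℕ → Set (ModuleCat.{u} A)
  | 0 => { M | ∀ x : M, x = 0 }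
  | 1 => addClosure A T
  | n + 2 => bullet A (addClosure A T) (bracket T (n + 1))

/-- The class `𝒯₁ ⊕ 𝒯₂ = {X ⊕ Y | X ∈ 𝒯₁, Y ∈ 𝒯₂}`. -/
def setSum (T1 T2 : Set (ModuleCat.{u} A)) : Set (ModuleCat.{u} A) :=
  { M | ∃ X ∈ T1, ∃ Y ∈ T2, Nonempty ((M : Type u) ≃ₗ[A] (↥X × ↥Y)) }

/-- The extension dimension of a subcategory `𝒞` of `A`-mod:
the least `n` such that `𝒞 ⊆ [T]_{n+1}` for some finitely generated module `T`. -/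
noncomputable def ed (C : Set (ModuleCat.{u} A)) : ℕ∞ :=
  sInf { n : ℕ∞ | ∃ m : ℕ, n = (m : ℕ∞) ∧
    ∃ T : ModuleCat.{u} A, Module.Finite A T ∧ C ⊆ bracket A {T} (m + 1) }

/-- The category `Ωⁿ(A-mod)` of `n`-th syzygy modules: finitely generated `K` admitting
an exact sequence `0 → K → P⁰ → ⋯ → P^{n-1} → M → 0` with all `Pⁱ` projective,
encoded by a chain of short exact sequences. -/
def SyzCat (n : ℕ) : Set (ModuleCat.{u} A) :=
  { K | Module.Finite A K ∧
    ∃ (Ks : Fin (n + 1) → ModuleCat.{u} A) (P : Fin n → ModuleCat.{u} A),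
      Ks 0 = K ∧ (∀ i, Module.Finite A (Ks i)) ∧
      (∀ i, Module.Finite A (P i) ∧ Module.Projective A (P i)) ∧
      ∀ i : Fin n, SES A (Ks i.castSucc) (P i) (Ks i.succ) }

/-- The category `Ω^∞(A-mod)` of infinite syzygy modules: finitely generated `K` admitting
an exact sequence `0 → K → P⁰ → P¹ → ⋯` with all `Pⁱ` projective. -/
def InfSyzCat : Set (ModuleCat.{u} A) :=
  { K | Module.Finite A K ∧
    ∃ Ks P : ℕ → ModuleCat.{u} A,
      Ks 0 = K ∧ (∀ i, Module.Finite A (Ks i)) ∧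
      (∀ i, Module.Finite A (P i) ∧ Module.Projective A (P i)) ∧
      ∀ i : ℕ, SES A (Ks i) (P i) (Ks (i + 1)) }

/-- A submodule is superfluous (small). -/
def Superfluous {M : ModuleCat.{u} A} (N : Submodule A M) : Prop :=
  ∀ N' : Submodule A M, N ⊔ N' = ⊤ → N' = ⊤

/-- `K` is the (minimal) syzygy `Ω(M)`: the kernel of a projective cover `P → M`. -/
def IsSyzygyOf (K M : ModuleCat.{u} A) : Prop :=
  ∃ (P : ModuleCat.{u} A) (i : K →ₗ[A] P) (p : P →ₗ[A] M),
    Module.Projective A P ∧ Function.Injective i ∧ Function.Surjective p ∧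
    LinearMap.range i = LinearMap.ker p ∧ Superfluous A (LinearMap.ker p)

/-- `K ≅ Ωⁿ(M)`. -/
def IsIterSyzygyOf : ℕ → ModuleCat.{u} A → ModuleCat.{u} A → Prop
  | 0, K, M => Nonempty ((K : Type u) ≃ₗ[A] M)
  | n + 1, K, M => ∃ L, IsIterSyzygyOf n L M ∧ IsSyzygyOf A K L

/-- A submodule is essential. -/
def EssentialIn {M : ModuleCat.{u} A} (N : Submodule A M) : Prop :=
  ∀ N' : Submodule A M, N ⊓ N' = ⊥ → N' = ⊥

/-- `C` is the cosyzygy `Ω⁻¹(M)`: the cokernel of an injective envelope `M → I`. -/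
def IsCosyzygyOf (C M : ModuleCat.{u} A) : Prop :=
  ∃ (I : ModuleCat.{u} A) (j : M →ₗ[A] I) (q : I →ₗ[A] C),
    Module.Injective A I ∧ Function.Injective j ∧ Function.Surjective q ∧
    LinearMap.range j = LinearMap.ker q ∧ EssentialIn A (LinearMap.range j)

/-- `C ≅ Ω⁻ⁿ(M)`. -/
def IsIterCosyzygyOf : ℕ → ModuleCat.{u} A → ModuleCat.{u} A → Prop
  | 0, C, M => Nonempty ((C : Type u) ≃ₗ[A] M)
  | n + 1, C, M => ∃ L, IsIterCosyzygyOf n L M ∧ IsCosyzygyOf A C L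


section Aux

variable {A}

lemma isSummand_trans {M N P : ModuleCat.{u} A} (h1 : IsSummand A M N) (h2 : IsSummand A N P) :
    IsSummand A M P := by
  obtain ⟨i1, r1, hir1⟩ := h1
  obtain ⟨i2, r2, hir2⟩ := h2
  refine ⟨i2.comp i1, r1.comp r2, ?_⟩
  ext x
  have e2 : r2 (i2 (i1 x)) = i1 x := LinearMap.congr_fun hir2 (i1 x)
  have e1 : r1 (i1 x) = x := LinearMap.congr_fun hir1 x
  simp [LinearMap.comp_apply, e2, e1]

lemma isSummand_of_equiv {M N : ModuleCat.{u} A} (e : (M : Type u) ≃ₗ[A] N) :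
    IsSummand A M N :=
  ⟨e.toLinearMap, e.symm.toLinearMap, by ext x; simp⟩

lemma isSummand_prod {M1 M2 N1 N2 : ModuleCat.{u} A}
    (h1 : IsSummand A M1 N1) (h2 : IsSummand A M2 N2) :
    IsSummand A (ModuleCat.of A (↥M1 × ↥M2)) (ModuleCat.of A (↥N1 × ↥N2)) := by
  obtain ⟨i1, r1, hir1⟩ := h1
  obtain ⟨i2, r2, hir2⟩ := h2
  refine ⟨i1.prodMap i2, r1.prodMap r2, ?_⟩
  refine LinearMap.ext fun x => ?_
  simp only [LinearMap.comp_apply, LinearMap.prodMap_apply, LinearMap.id_apply]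
  exact Prod.ext (LinearMap.congr_fun hir1 x.1) (LinearMap.congr_fun hir2 x.2)

lemma isSummand_pi {ι : Type} (F G : ι → ModuleCat.{u} A)
    (h : ∀ j, IsSummand A (F j) (G j)) :
    IsSummand A (ModuleCat.of A (∀ j, (F j : Type u))) (ModuleCat.of A (∀ j, (G j : Type u))) := by
  choose i r hir using h
  refine ⟨LinearMap.pi (fun j => (i j).comp (LinearMap.proj j)),
    LinearMap.pi (fun j => (r j).comp (LinearMap.proj j)), ?_⟩
  refine LinearMap.ext fun x => funext fun j => ?_
  simpa [LinearMap.pi_apply] using LinearMap.congr_fun (hir j) (x j)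

/-- Linear version of `Equiv.sumPiEquivProdPi`. -/
def sumPiLEquiv {ι ι' : Type} (φ : ι ⊕ ι' → Type u) [∀ i, AddCommGroup (φ i)]
    [∀ i, Module A (φ i)] :
    (∀ i, φ i) ≃ₗ[A] (∀ i, φ (Sum.inl i)) × (∀ i', φ (Sum.inr i')) :=
  { Equiv.sumPiEquivProdPi φ with
    map_add' := fun _ _ => rfl
    map_smul' := fun _ _ => rfl }

lemma mem_addClosure_fintype {S : Set (ModuleCat.{u} A)} {M : ModuleCat.{u} A}
    {ι : Type} [Fintype ι] (f : ι → ModuleCat.{u} A)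
    (hf : ∀ i, f i ∈ S) (h : IsSummand A M (ModuleCat.of A (∀ i, (f i : Type u)))) :
    M ∈ addClosure A S := by
  let e := (Fintype.equivFin ι).symm
  refine ⟨Fintype.card ι, fun j => f (e j), fun j => hf _, isSummand_trans h ?_⟩
  exact isSummand_of_equiv (LinearEquiv.piCongrLeft A (fun i => (f i : Type u)) e).symm

lemma addClosure_summand {S : Set (ModuleCat.{u} A)} {M N : ModuleCat.{u} A}
    (h : IsSummand A M N) (hN : N ∈ addClosure A S) : M ∈ addClosure A S := by
  obtain ⟨n, f, hf, hs⟩ := hN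
  exact ⟨n, f, hf, isSummand_trans h hs⟩

lemma mem_addClosure_of_mem {S : Set (ModuleCat.{u} A)} {t : ModuleCat.{u} A}
    (h : t ∈ S) : t ∈ addClosure A S :=
  ⟨1, fun _ => t, fun _ => h, isSummand_of_equiv (LinearEquiv.funUnique (Fin 1) A ↥t).symm⟩

lemma punit_mem_addClosure (S : Set (ModuleCat.{u} A)) :
    ModuleCat.of A PUnit.{u+1} ∈ addClosure A S :=
  ⟨0, Fin.elim0, fun j => j.elim0, 0, 0, Subsingleton.elim _ _⟩

lemma prod_mem_addClosure {S : Set (ModuleCat.{u} A)} {X Y : ModuleCat.{u} A}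
    (hX : X ∈ addClosure A S) (hY : Y ∈ addClosure A S) :
    ModuleCat.of A (↥X × ↥Y) ∈ addClosure A S := by
  obtain ⟨a, f, hf, hXs⟩ := hX
  obtain ⟨b, g, hg, hYs⟩ := hY
  refine mem_addClosure_fintype (ι := Fin a ⊕ Fin b) (Sum.elim f g) ?_ ?_
  · rintro (j | j)
    · exact hf j
    · exact hg j
  · exact isSummand_trans (isSummand_prod hXs hYs)
      (isSummand_of_equiv (sumPiLEquiv (fun i => ((Sum.elim f g i : ModuleCat.{u} A) : Type u))).symm)

lemma addClosure_mono {S S' : Set (ModuleCat.{u} A)} (h : S ⊆ S') :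
    addClosure A S ⊆ addClosure A S' := by
  rintro M ⟨n, f, hf, hs⟩
  exact ⟨n, f, fun j => h (hf j), hs⟩

lemma bullet_mono {C C' D D' : Set (ModuleCat.{u} A)} (hC : C ⊆ C') (hD : D ⊆ D') :
    bullet A C D ⊆ bullet A C' D' := by
  apply addClosure_mono
  rintro X ⟨c, hc, d, hd, hses⟩
  exact ⟨c, hC hc, d, hD hd, hses⟩

lemma bracket_eq_addClosure (T : Set (ModuleCat.{u} A)) (k : ℕ) :
    ∃ S', bracket A T (k + 1) = addClosure A S' := by
  cases k with
  | zero => exact ⟨T, rfl⟩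
  | succ n => exact ⟨_, rfl⟩

lemma bracket_summand {T : Set (ModuleCat.{u} A)} {k : ℕ} {M N : ModuleCat.{u} A}
    (h : IsSummand A M N) (hN : N ∈ bracket A T (k + 1)) : M ∈ bracket A T (k + 1) := by
  obtain ⟨S', hS⟩ := bracket_eq_addClosure T k
  rw [hS] at hN ⊢
  exact addClosure_summand h hN

lemma prod_mem_bracket {T : Set (ModuleCat.{u} A)} {k : ℕ} {X Y : ModuleCat.{u} A}
    (hX : X ∈ bracket A T (k + 1)) (hY : Y ∈ bracket A T (k + 1)) :
    ModuleCat.of A (↥X × ↥Y) ∈ bracket A T (k + 1) := by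
  obtain ⟨S', hS⟩ := bracket_eq_addClosure T k
  rw [hS] at hX hY ⊢
  exact prod_mem_addClosure hX hY

lemma bracket_succ_mono (T : Set (ModuleCat.{u} A)) :
    ∀ k : ℕ, bracket A T (k + 1) ⊆ bracket A T (k + 2) := by
  intro k
  induction k with
  | zero =>
    intro X hX
    show X ∈ bullet A (addClosure A T) (bracket A T 1)
    apply mem_addClosure_of_mem
    refine ⟨X, hX, ModuleCat.of A PUnit.{u+1}, punit_mem_addClosure T, LinearMap.id, 0, ?_, ?_, ?_⟩
    · exact fun a b h => h
    · exact fun y => ⟨0, Subsingleton.elim _ _⟩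
    · simp [LinearMap.range_id, LinearMap.ker_zero]
  | succ k ih =>
    show bullet A (addClosure A T) (bracket A T (k + 1)) ⊆
      bullet A (addClosure A T) (bracket A T (k + 2))
    exact bullet_mono (subset_refl _) ih

lemma bracket_mono_index {T : Set (ModuleCat.{u} A)} {m l : ℕ} (hm : 1 ≤ m) (h : m ≤ l) :
    bracket A T m ⊆ bracket A T l := by
  induction l, h using Nat.le_induction with
  | base => exact subset_refl _
  | succ l hml ih =>
    obtain ⟨k, rfl⟩ : ∃ k, l = k + 1 := ⟨l - 1, (Nat.succ_pred_eq_of_pos (hm.trans hml)).symm⟩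
    exact ih.trans (bracket_succ_mono T k)

lemma bracket_mono_set {S S' : Set (ModuleCat.{u} A)}
    (h : addClosure A S ⊆ addClosure A S') :
    ∀ k : ℕ, bracket A S (k + 1) ⊆ bracket A S' (k + 1) := by
  intro k
  induction k with
  | zero => exact h
  | succ k ih =>
    show bullet A (addClosure A S) (bracket A S (k + 1)) ⊆
      bullet A (addClosure A S') (bracket A S' (k + 1))
    exact bullet_mono h ih

lemma addClosure_singleton_subset {t s : ModuleCat.{u} A} (h : IsSummand A t s) :
    addClosure A {t} ⊆ addClosure A {s} := by
  rintro M ⟨n, f, hf, hs⟩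
  refine mem_addClosure_fintype (ι := Fin n) (fun _ => s) (fun _ => rfl) ?_
  refine isSummand_trans hs (isSummand_pi f (fun _ => s) (fun j => ?_))
  rw [hf j]
  exact h

end Aux

/-- Corollary 2.4: for finitely generated modules `T₁, T₂` over an Artin
algebra and `m, n ≥ 1`, any module isomorphic to `X ⊕ Y` with `X ∈ [T₁]ₘ` and `Y ∈ [T₂]ₙ`
lies in `[T₁ ⊕ T₂]_{max m n}`. -/
theorem stmt1 (R : Type u) [CommRing R] [IsArtinianRing R]
    [Algebra R A] [Module.Finite R A]
    (T1 T2 : ModuleCat.{u} A) (hT1 : Module.Finite A T1) (hT2 : Module.Finite A T2)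
    (m n : ℕ) (hm : 1 ≤ m) (hn : 1 ≤ n)
    (X Y M : ModuleCat.{u} A)
    (hX : X ∈ bracket A {T1} m) (hY : Y ∈ bracket A {T2} n)
    (hM : Nonempty ((M : Type u) ≃ₗ[A] (↥X × ↥Y))) :
    M ∈ bracket A {ModuleCat.of A (↥T1 × ↥T2)} (max m n) := by
  have hmax : 1 ≤ max m n := hm.trans (le_max_left m n)
  obtain ⟨k, hk⟩ : ∃ k, max m n = k + 1 := ⟨max m n - 1, (Nat.succ_pred_eq_of_pos hmax).symm⟩
  obtain ⟨m', rfl⟩ : ∃ m', m = m' + 1 := ⟨m - 1, (Nat.succ_pred_eq_of_pos hm).symm⟩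
  obtain ⟨n', rfl⟩ : ∃ n', n = n' + 1 := ⟨n - 1, (Nat.succ_pred_eq_of_pos hn).symm⟩
  set T12 := ModuleCat.of A (↥T1 × ↥T2) with hT12
  have h1 : addClosure A {T1} ⊆ addClosure A {T12} :=
    addClosure_singleton_subset ⟨LinearMap.inl A T1 T2, LinearMap.fst A T1 T2, rfl⟩
  have h2 : addClosure A {T2} ⊆ addClosure A {T12} :=
    addClosure_singleton_subset ⟨LinearMap.inr A T1 T2, LinearMap.snd A T1 T2, rfl⟩
  have hX' : X ∈ bracket A {T12} (max (m' + 1) (n' + 1)) :=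
    bracket_mono_index (Nat.le_add_left 1 m') (le_max_left _ _)
      (bracket_mono_set h1 m' hX)
  have hY' : Y ∈ bracket A {T12} (max (m' + 1) (n' + 1)) :=
    bracket_mono_index (Nat.le_add_left 1 n') (le_max_right _ _)
      (bracket_mono_set h2 n' hY)
  rw [hk] at hX' hY' ⊢
  exact bracket_summand (isSummand_of_equiv hM.some) (prod_mem_bracket hX' hY')


end Paper
end

section
/- Let A be an Artin algebra and X, Y finitely generated A-modules with [X]_{n₁} ⊆ [Y]_{n₂} for positive integers n₁, n₂. Then for every m ≥ 0, [Ω^m(X)]_{n₁} ⊆ [Ω^m(Y)]_{n₁·n₂}, where Ω^m denotes the m-th syzygy. -/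
open CategoryTheory

universe u

namespace Paper

variable (A : Type u) [Ring A]

/-!
For `n ≥ 1`, `[T]ₙ` is the class of direct summands of modules admitting a filtration of length
`n` with subquotients in `add T`; filtrations splice along short exact sequences by the third
isomorphism theorem. Substituting filtrations into filtrations shows that `S ∈ [T]_b` implies
`[S]_a ⊆ [T]_{ab}`. Syzygies are compatible with this description: by the horseshoe lemma a module
filtered by `add Y` has a projective presentation whose kernel is filtered by `add Ω(Y)`, and
minimality of projective covers makes `Ω` of a summand of that module a summand of the kernel.
Hence `X ∈ [Y]_{n₂}` gives `Ωᵐ X ∈ [Ωᵐ Y]_{n₂}`, and so `[Ωᵐ X]_{n₁} ⊆ [Ωᵐ Y]_{n₁ n₂}`.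
-/

open Function LinearMap

variable {A}

namespace IsSummand

lemma refl (M : ModuleCat.{u} A) : IsSummand A M M :=
  ⟨LinearMap.id, LinearMap.id, rfl⟩

lemma trans {M N P : ModuleCat.{u} A} (h₁ : IsSummand A M N) (h₂ : IsSummand A N P) :
    IsSummand A M P := by
  obtain ⟨i₁, r₁, h₁⟩ := h₁
  obtain ⟨i₂, r₂, h₂⟩ := h₂
  refine ⟨i₂ ∘ₗ i₁, r₁ ∘ₗ r₂, ?_⟩
  rw [LinearMap.comp_assoc, ← LinearMap.comp_assoc i₁, h₂, LinearMap.id_comp, h₁]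

lemma of_linearEquiv {M N : ModuleCat.{u} A} (e : M ≃ₗ[A] N) : IsSummand A M N :=
  ⟨e, e.symm, by ext; simp⟩

lemma of_subsingleton {M : ModuleCat.{u} A} [Subsingleton M] (N : ModuleCat.{u} A) :
    IsSummand A M N :=
  ⟨0, 0, Subsingleton.elim _ _⟩

lemma prod_right (M N : ModuleCat.{u} A) : IsSummand A N (ModuleCat.of A (M × N)) :=
  ⟨inr A M N, snd A M N, rfl⟩

lemma pi {n : ℕ} {M X : Fin n → ModuleCat.{u} A} (h : ∀ j, IsSummand A (M j) (X j)) :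
    IsSummand A (ModuleCat.of A (∀ j, M j)) (ModuleCat.of A (∀ j, X j)) := by
  choose i r hir using h
  exact ⟨piMap i, piMap r, LinearMap.ext fun x => funext fun j => congr($(hir j) (x j))⟩

lemma exists_linearEquiv_prod {M X : ModuleCat.{u} A} (h : IsSummand A M X) :
    ∃ M' : ModuleCat.{u} A, Nonempty (X ≃ₗ[A] M' × M) := by
  obtain ⟨i, r, hri⟩ := h
  exact ⟨ModuleCat.of A (ker r), ⟨((exact_subtype_ker_map r).splitSurjectiveEquiv
    (ker r).injective_subtype ⟨i, hri⟩).1⟩⟩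

end IsSummand

lemma ses_iff {C W V : ModuleCat.{u} A} :
    SES A C W V ↔ ∃ (f : C →ₗ[A] W) (g : W →ₗ[A] V), Injective f ∧ Surjective g ∧ Exact f g := by
  simp only [SES, exact_iff, eq_comm]

lemma ses_of_exact {C W V : ModuleCat.{u} A} {f : C →ₗ[A] W} {g : W →ₗ[A] V}
    (hf : Injective f) (hg : Surjective g) (hfg : Exact f g) : SES A C W V :=
  ses_iff.mpr ⟨f, g, hf, hg, hfg⟩

lemma ses_ker {W V : ModuleCat.{u} A} {g : W →ₗ[A] V} (hg : Surjective g) :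
    SES A (ModuleCat.of A (ker g)) W V :=
  ses_of_exact (ker g).injective_subtype hg (exact_subtype_ker_map g)

lemma ses_prod (C V : ModuleCat.{u} A) : SES A C (ModuleCat.of A (C × V)) V :=
  ses_of_exact (f := inl A C V) LinearMap.inl_injective LinearMap.snd_surjective Exact.inl_snd

lemma ses_self (M : ModuleCat.{u} A) : SES A M M (ModuleCat.of A PUnit.{u + 1}) :=
  ses_of_exact (f := LinearMap.id) (g := 0) injective_id (fun _ => ⟨0, rfl⟩)
    fun _ => by simp

namespace SES

variable {C W V : ModuleCat.{u} A}

lemma of_linearEquiv {C' W' V' : ModuleCat.{u} A} (h : SES A C W V) (eC : C ≃ₗ[A] C')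
    (eW : W ≃ₗ[A] W') (eV : V ≃ₗ[A] V') : SES A C' W' V' := by
  obtain ⟨f, g, hf, hg, hfg⟩ := ses_iff.mp h
  refine ses_of_exact (f := eW ∘ₗ f ∘ₗ eC.symm) (g := eV ∘ₗ g ∘ₗ eW.symm)
    (by simpa using hf) (by simpa using hg) ?_
  exact Exact.of_ladder_linearEquiv_of_exact (e₁ := eC) (e₂ := eW) (e₃ := eV)
    (by ext; simp) (by ext; simp) hfg

lemma nonempty_linearEquiv_of_subsingleton_left [Subsingleton C] (h : SES A C W V) :
    Nonempty (W ≃ₗ[A] V) := by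
  obtain ⟨f, g, -, hg, hfg⟩ := ses_iff.mp h
  refine ⟨LinearEquiv.ofBijective g ⟨?_, hg⟩⟩
  rw [← ker_eq_bot, hfg.linearMap_ker_eq, range_eq_bot]
  exact Subsingleton.elim _ _

lemma nonempty_linearEquiv_of_subsingleton_right [Subsingleton V] (h : SES A C W V) :
    Nonempty (C ≃ₗ[A] W) := by
  obtain ⟨f, g, hf, -, hfg⟩ := ses_iff.mp h
  refine ⟨LinearEquiv.ofBijective f ⟨hf, ?_⟩⟩
  rw [← range_eq_top, ← hfg.linearMap_ker_eq, ker_eq_top]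
  exact Subsingleton.elim _ _

lemma prod {C' W' V' : ModuleCat.{u} A} (h : SES A C W V) (h' : SES A C' W' V') :
    SES A (ModuleCat.of A (C × C')) (ModuleCat.of A (W × W')) (ModuleCat.of A (V × V')) := by
  obtain ⟨f, g, hf, hg, hfg⟩ := h
  obtain ⟨f', g', hf', hg', hfg'⟩ := h'
  refine ⟨f.prodMap f', g.prodMap g', hf.prodMap hf', hg.prodMap hg', ?_⟩
  rw [range_prodMap, ker_prodMap, hfg, hfg']

lemma pi {n : ℕ} {C W V : Fin n → ModuleCat.{u} A} (h : ∀ j, SES A (C j) (W j) (V j)) :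
    SES A (ModuleCat.of A (∀ j, C j)) (ModuleCat.of A (∀ j, W j)) (ModuleCat.of A (∀ j, V j)) := by
  choose f g hf hg hfg using fun j => ses_iff.mp (h j)
  refine ses_of_exact (f := piMap f) (g := piMap g) (Injective.piMap hf) (Surjective.piMap hg)
    fun w => ?_
  refine ⟨fun hw => ?_, ?_⟩
  · choose c hc using fun j => (hfg j (w j)).mp (congr_fun hw j)
    exact ⟨c, funext hc⟩
  · rintro ⟨c, rfl⟩
    exact funext fun j => (hfg j _).mpr ⟨c j, rfl⟩

end SES

lemma SES.exists_isSummand {C W V C₂ V₂ : ModuleCat.{u} A} (h : SES A C W V)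
    (hC : IsSummand A C C₂) (hV : IsSummand A V V₂) :
    ∃ W₂ : ModuleCat.{u} A, IsSummand A W W₂ ∧ SES A C₂ W₂ V₂ := by
  obtain ⟨C', ⟨eC⟩⟩ := hC.exists_linearEquiv_prod
  obtain ⟨V', ⟨eV⟩⟩ := hV.exists_linearEquiv_prod
  exact ⟨_, IsSummand.prod_right (ModuleCat.of A (C' × V')) W,
    ((ses_prod C' V').prod h).of_linearEquiv eC.symm (LinearEquiv.refl A _) eV.symm⟩

-- `Q = W ⧸ C`, which contains `F ⧸ C ≅ F'` with quotient `G`.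
lemma SES.exists_ses_of_ses_left {C F F' W G : ModuleCat.{u} A} (h : SES A F W G)
    (hF : SES A C F F') : ∃ Q : ModuleCat.{u} A, SES A C W Q ∧ SES A F' Q G := by
  obtain ⟨j, q, hj, hq, hjq⟩ := ses_iff.mp h
  obtain ⟨i, π, hi, hπ, hiπ⟩ := ses_iff.mp hF
  have hrange_i : range i ≤ (range (j ∘ₗ i)).comap j := by
    rw [range_comp, Submodule.comap_map_eq_of_injective hj]
  have hrange_ji : range (j ∘ₗ i) ≤ (⊥ : Submodule A G).comap q := by
    rw [Submodule.comap_bot, hjq.linearMap_ker_eq]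
    exact range_comp_le_range i j
  have hmid : SES A (ModuleCat.of A (F ⧸ range i)) (ModuleCat.of A (W ⧸ range (j ∘ₗ i)))
      (ModuleCat.of A (G ⧸ (⊥ : Submodule A G))) := by
    refine ses_of_exact (f := (range i).mapQ _ j hrange_i) (g := Submodule.mapQ _ ⊥ q hrange_ji)
      ?_ ?_ ((hjq.exact_mapQ_iff hrange_i hrange_ji).mpr (by simp))
    · rw [← ker_eq_bot, Submodule.ker_mapQ, range_comp, Submodule.comap_map_eq_of_injective hj,
        Submodule.mkQ_map_self]
    · intro y
      obtain ⟨y, rfl⟩ := Submodule.mkQ_surjective _ y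
      obtain ⟨w, rfl⟩ := hq y
      exact ⟨Submodule.mkQ _ w, rfl⟩
  exact ⟨ModuleCat.of A (W ⧸ range (j ∘ₗ i)), ses_of_exact (hj.comp hi) (Submodule.mkQ_surjective _)
    (exact_map_mkQ_range (j ∘ₗ i)),
    hmid.of_linearEquiv (hiπ.linearEquivOfSurjective hπ) (LinearEquiv.refl A _)
      (Submodule.quotEquivOfEqBot ⊥ rfl)⟩

lemma nonempty_linearEquiv_ker {M N P : Type u} [AddCommGroup M] [AddCommGroup N]
    [AddCommGroup P] [Module A M] [Module A N] [Module A P] {f : M →ₗ[A] N} {g : N →ₗ[A] P}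
    (hf : Injective f) (hfg : Exact f g) : Nonempty (M ≃ₗ[A] ker g) :=
  ⟨(LinearEquiv.ofInjective f hf).trans (LinearEquiv.ofEq _ _ hfg.linearMap_ker_eq.symm)⟩

section Ladder

variable {A₁ B₁ C₁ A₂ B₂ C₂ : Type u} [AddCommGroup A₁] [AddCommGroup B₁] [AddCommGroup C₁]
  [AddCommGroup A₂] [AddCommGroup B₂] [AddCommGroup C₂] [Module A A₁] [Module A B₁] [Module A C₁]
  [Module A A₂] [Module A B₂] [Module A C₂]
  {f₁ : A₁ →ₗ[A] B₁} {g₁ : B₁ →ₗ[A] C₁} {f₂ : A₂ →ₗ[A] B₂} {g₂ : B₂ →ₗ[A] C₂}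
  {a : A₁ →ₗ[A] A₂} {b : B₁ →ₗ[A] B₂} {c : C₁ →ₗ[A] C₂}

lemma ses_ker_of_ladder (hf₁ : Injective f₁) (hg₁ : Surjective g₁) (h₁ : Exact f₁ g₁)
    (hf₂ : Injective f₂) (h₂ : Exact f₂ g₂) (ha : Surjective a)
    (hfa : b ∘ₗ f₁ = f₂ ∘ₗ a) (hgb : c ∘ₗ g₁ = g₂ ∘ₗ b) :
    SES A (ModuleCat.of A (ker a)) (ModuleCat.of A (ker b)) (ModuleCat.of A (ker c)) := by
  have hfa' : ∀ x, b (f₁ x) = f₂ (a x) := fun x => congr($hfa x)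
  have hgb' : ∀ y, c (g₁ y) = g₂ (b y) := fun y => congr($hgb y)
  have hf : ker a ≤ (ker b).comap f₁ := fun x hx => by simp_all [mem_ker]
  have hg : ker b ≤ (ker c).comap g₁ := fun y hy => by simp_all [mem_ker]
  refine ses_of_exact (f := f₁.restrict hf) (g := g₁.restrict hg)
    (fun x y hxy => Subtype.ext (hf₁ congr(($hxy).1))) ?_ ?_
  · rintro ⟨z, hz⟩
    obtain ⟨y, rfl⟩ := hg₁ z
    obtain ⟨x', hx'⟩ := (h₂ (b y)).mp (by rw [← hgb']; exact hz)
    obtain ⟨x, rfl⟩ := ha x'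
    refine ⟨⟨y - f₁ x, ?_⟩, Subtype.ext ?_⟩
    · rw [mem_ker, map_sub, hfa', hx', sub_self]
    · simp [h₁.apply_apply_eq_zero]
  · rintro ⟨y, hy⟩
    refine ⟨fun hy0 => ?_, ?_⟩
    · obtain ⟨x, rfl⟩ := (h₁ y).mp congr(($hy0).1)
      refine ⟨⟨x, hf₂ ?_⟩, rfl⟩
      rw [← hfa', hy, map_zero]
    · rintro ⟨x, hx⟩
      rw [← hx]
      exact Subtype.ext (h₁.apply_apply_eq_zero x.1)

end Ladder

lemma SES.horseshoe {C W V ZC PC ZV QV : ModuleCat.{u} A} (h : SES A C W V)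
    (hC : SES A ZC PC C) [Module.Projective A PC] (hV : SES A ZV QV V)
    [Module.Projective A QV] :
    ∃ Z Q : ModuleCat.{u} A, Module.Projective A Q ∧ SES A Z Q W ∧ SES A ZC Z ZV := by
  obtain ⟨ι, ω, hι, hω, hιω⟩ := ses_iff.mp h
  obtain ⟨jC, c, hjC, hc, hjc⟩ := ses_iff.mp hC
  obtain ⟨jV, pV, hjV, hpV, hjp⟩ := ses_iff.mp hV
  obtain ⟨eC⟩ := nonempty_linearEquiv_ker hjC hjc
  obtain ⟨eV⟩ := nonempty_linearEquiv_ker hjV hjp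
  obtain ⟨l, hl⟩ := Module.projective_lifting_property ω pV hω
  have hl' : ∀ y, ω (l y) = pV y := fun y => congr($hl y)
  let p : PC × QV →ₗ[A] W := ι ∘ₗ c ∘ₗ fst A PC QV + l ∘ₗ snd A PC QV
  have hp : Surjective p := fun w => by
    obtain ⟨y, hy⟩ := hpV (ω w)
    obtain ⟨x', hx'⟩ := (hιω (w - l y)).mp (by rw [map_sub, hl', hy, sub_self])
    obtain ⟨x, rfl⟩ := hc x'
    exact ⟨(x, y), by simp [p, hx']⟩
  have hker := ses_ker_of_ladder (f₁ := inl A PC QV) (g₁ := snd A PC QV) (b := p) (c := pV)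
    inl_injective snd_surjective Exact.inl_snd hι hιω hc (by ext; simp [p])
    (by ext <;> simp [p, hl', hιω.apply_apply_eq_zero])
  exact ⟨ModuleCat.of A (ker p), ModuleCat.of A (PC × QV),
    inferInstanceAs (Module.Projective A (PC × QV)), ses_ker (W := ModuleCat.of A (PC × QV)) hp,
    hker.of_linearEquiv eC.symm (LinearEquiv.refl A _) eV.symm⟩

lemma surjective_of_comp_eq_of_superfluous {P X : ModuleCat.{u} A} {c : P →ₗ[A] X}
    {φ : P →ₗ[A] P} (hc : Superfluous A (ker c)) (hφ : c ∘ₗ φ = c) : Surjective φ := by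
  rw [← range_eq_top]
  refine hc _ (eq_top_iff.mpr fun x _ => Submodule.mem_sup.mpr
    ⟨x - φ x, ?_, φ x, mem_range_self φ x, sub_add_cancel x _⟩)
  rw [mem_ker, map_sub, ← LinearMap.comp_apply, hφ, sub_self]

lemma isSummand_ker_of_comp_eq_id {P Q X W : ModuleCat.{u} A} {c : P →ₗ[A] X}
    {p : Q →ₗ[A] W} {α : P →ₗ[A] Q} {β : Q →ₗ[A] P} (hβα : β ∘ₗ α = LinearMap.id)
    (hα : ker c ≤ (ker p).comap α) (hβ : ker p ≤ (ker c).comap β) :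
    IsSummand A (ModuleCat.of A (ker c)) (ModuleCat.of A (ker p)) :=
  ⟨α.restrict hα, β.restrict hβ, by ext x; exact congr($hβα x)⟩

/-- Lifting along the two presentations gives an endomorphism `h ∘ t` of `P` over `X`; as `ker c`
is superfluous it is surjective, and a section of it splits `ker c` off `ker p`. -/
lemma IsSyzygyOf.isSummand_of_ses {K X W Z Q : ModuleCat.{u} A} (hK : IsSyzygyOf A K X)
    (hXW : IsSummand A X W) (hZ : SES A Z Q W) [Module.Projective A Q] : IsSummand A K Z := by
  obtain ⟨P, iK, c, hP, hiK, hc, hiKc, hsup⟩ := hK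
  obtain ⟨e, s, hse⟩ := hXW
  obtain ⟨jZ, p, hjZ, hp, hjp⟩ := ses_iff.mp hZ
  obtain ⟨eK⟩ := nonempty_linearEquiv_ker hiK (exact_iff.mpr hiKc.symm)
  obtain ⟨eZ⟩ := nonempty_linearEquiv_ker hjZ hjp
  obtain ⟨h, hh⟩ := Module.projective_lifting_property c (s ∘ₗ p) hc
  obtain ⟨t, ht⟩ := Module.projective_lifting_property p (e ∘ₗ c) hp
  have hφ : c ∘ₗ h ∘ₗ t = c := by
    rw [← LinearMap.comp_assoc, hh, LinearMap.comp_assoc, ht, ← LinearMap.comp_assoc, hse,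
      LinearMap.id_comp]
  obtain ⟨ψ, hψ⟩ := Module.projective_lifting_property (h ∘ₗ t) LinearMap.id
    (surjective_of_comp_eq_of_superfluous hsup hφ)
  have hcψ : c ∘ₗ ψ = c :=
    calc c ∘ₗ ψ = (c ∘ₗ h ∘ₗ t) ∘ₗ ψ := by rw [hφ]
      _ = c := by rw [LinearMap.comp_assoc, hψ, LinearMap.comp_id]
  have hα : ker c ≤ (ker p).comap (t ∘ₗ ψ) := fun x (hx : c x = 0) =>
    show p (t (ψ x)) = 0 by rw [← e.map_zero, ← hx, ← congr($hcψ x)]; exact congr($ht (ψ x))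
  have hβ : ker p ≤ (ker c).comap h := fun y (hy : p y = 0) =>
    show c (h y) = 0 by rw [← s.map_zero, ← hy]; exact congr($hh y)
  have hsummand := isSummand_ker_of_comp_eq_id (by rw [← LinearMap.comp_assoc, hψ]) hα hβ
  exact (IsSummand.of_linearEquiv eK).trans (hsummand.trans (IsSummand.of_linearEquiv eZ.symm))

instance {ι : Type*} [Fintype ι] (P : ι → Type u) [∀ i, AddCommGroup (P i)]
    [∀ i, Module A (P i)] [∀ i, Module.Projective A (P i)] : Module.Projective A (∀ i, P i) := by
  classical exact Module.Projective.of_equiv DFinsupp.linearEquivFunOnFintype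

lemma mem_addClosure_of_isSummand {S : Set (ModuleCat.{u} A)} {M W : ModuleCat.{u} A}
    (hW : W ∈ S) (h : IsSummand A M W) : M ∈ addClosure A S :=
  ⟨1, fun _ => W, fun _ => hW,
    h.trans (IsSummand.of_linearEquiv (LinearEquiv.funUnique (Fin 1) A W).symm)⟩

lemma IsSummand.mem_addClosure {S : Set (ModuleCat.{u} A)} {M W : ModuleCat.{u} A}
    (h : IsSummand A M W) (hW : W ∈ addClosure A S) : M ∈ addClosure A S :=
  let ⟨n, f, hf, hW⟩ := hW
  ⟨n, f, hf, h.trans hW⟩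

lemma mem_addClosure_of_subsingleton {S : Set (ModuleCat.{u} A)} {M : ModuleCat.{u} A}
    [Subsingleton M] : M ∈ addClosure A S :=
  ⟨0, Fin.elim0, fun j => j.elim0, IsSummand.of_subsingleton _⟩

lemma mem_addClosure_singleton {T M : ModuleCat.{u} A} :
    M ∈ addClosure A {T} ↔ ∃ k, IsSummand A M (ModuleCat.of A (Fin k → T)) := by
  constructor
  · rintro ⟨k, f, hf, hM⟩
    obtain rfl : f = fun _ => T := funext hf
    exact ⟨k, hM⟩
  · rintro ⟨k, hk⟩
    exact ⟨k, fun _ => T, fun _ => rfl, hk⟩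

lemma pi_mem_addClosure_singleton {T : ModuleCat.{u} A} {k : ℕ} (M : Fin k → ModuleCat.{u} A)
    (hM : ∀ j, M j ∈ addClosure A {T}) : ModuleCat.of A (∀ j, M j) ∈ addClosure A {T} := by
  choose n hn using fun j => mem_addClosure_singleton.mp (hM j)
  exact mem_addClosure_singleton.mpr ⟨∑ j, n j, (IsSummand.pi hn).trans <|
    IsSummand.of_linearEquiv <| (LinearEquiv.piCurry A fun j (_ : Fin (n j)) => (T : Type u)).symm
      ≪≫ₗ LinearEquiv.funCongrLeft A T finSigmaFinEquiv.symm⟩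

lemma addClosure_singleton_subset_s3 {T T' : ModuleCat.{u} A} (e : T ≃ₗ[A] T') :
    addClosure A {T} ⊆ addClosure A {T'} := fun M hM => by
  obtain ⟨k, hk⟩ := mem_addClosure_singleton.mp hM
  exact mem_addClosure_singleton.mpr
    ⟨k, hk.trans (IsSummand.of_linearEquiv (LinearEquiv.piCongrRight fun _ => e))⟩

/-- Modules admitting a filtration of length `n` with all subquotients in `C`. -/
def Filtered (C : Set (ModuleCat.{u} A)) : ℕ → Set (ModuleCat.{u} A)
  | 0 => { M | Subsingleton M }
  | n + 1 => { W | ∃ C' ∈ C, ∃ V ∈ Filtered C n, SES A C' W V }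

namespace Filtered

variable {C : Set (ModuleCat.{u} A)}

lemma of_linearEquiv : ∀ {n : ℕ} {W W' : ModuleCat.{u} A}, W ∈ Filtered C n →
    (W ≃ₗ[A] W') → W' ∈ Filtered C n
  | 0, _, _, hW, e => e.toEquiv.subsingleton_congr.mp hW
  | _ + 1, _, _, ⟨C', hC', V, hV, h⟩, e =>
    ⟨C', hC', V, hV, h.of_linearEquiv (LinearEquiv.refl A _) e (LinearEquiv.refl A _)⟩

lemma mono {D : Set (ModuleCat.{u} A)} (hCD : C ⊆ D) :
    ∀ {n : ℕ} {W : ModuleCat.{u} A}, W ∈ Filtered C n → W ∈ Filtered D n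
  | 0, _, hW => hW
  | _ + 1, _, ⟨C', hC', V, hV, h⟩ => ⟨C', hCD hC', V, mono hCD hV, h⟩

lemma of_subsingleton (hC : ∀ M : ModuleCat.{u} A, Subsingleton M → M ∈ C) :
    ∀ (n : ℕ) (M : ModuleCat.{u} A) [Subsingleton M], M ∈ Filtered C n
  | 0, _, h => h
  | n + 1, M, hM => ⟨M, hC M hM, _, of_subsingleton hC n (ModuleCat.of A PUnit), ses_self M⟩

lemma of_mem (hC : ∀ M : ModuleCat.{u} A, Subsingleton M → M ∈ C) {n : ℕ} (hn : 0 < n)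
    {T : ModuleCat.{u} A} (hT : T ∈ C) : T ∈ Filtered C n := by
  obtain ⟨n, rfl⟩ := Nat.exists_eq_add_one.mpr hn
  exact ⟨T, hT, _, of_subsingleton hC n (ModuleCat.of A PUnit), ses_self T⟩

lemma pi (hC : ∀ {k : ℕ} (M : Fin k → ModuleCat.{u} A), (∀ j, M j ∈ C) →
      ModuleCat.of A (∀ j, M j) ∈ C) :
    ∀ {n k : ℕ} {W : Fin k → ModuleCat.{u} A}, (∀ j, W j ∈ Filtered C n) →
      ModuleCat.of A (∀ j, W j) ∈ Filtered C n
  | 0, _, W, hW =>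
    have : ∀ j, Subsingleton (W j) := hW
    inferInstanceAs (Subsingleton (∀ j, W j))
  | _ + 1, _, _, hW => by
    choose C' hC' V hV h using hW
    exact ⟨_, hC C' hC', _, pi hC hV, SES.pi h⟩

lemma of_ses : ∀ {a b : ℕ} {F W G : ModuleCat.{u} A}, SES A F W G → F ∈ Filtered C a →
    G ∈ Filtered C b → W ∈ Filtered C (a + b)
  | 0, b, F, W, G, h, (hF : Subsingleton F), hG => by
    obtain ⟨e⟩ := h.nonempty_linearEquiv_of_subsingleton_left
    simpa using of_linearEquiv hG e.symm
  | a + 1, b, F, W, G, h, ⟨C₁, hC₁, F', hF', hF⟩, hG => by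
    obtain ⟨Q, hW, hQ⟩ := h.exists_ses_of_ses_left hF
    rw [Nat.add_right_comm]
    exact ⟨C₁, hC₁, Q, of_ses hQ hF' hG, hW⟩

end Filtered

def SummandOfFiltered (C : Set (ModuleCat.{u} A)) (n : ℕ) : Set (ModuleCat.{u} A) :=
  { M | ∃ W ∈ Filtered C n, IsSummand A M W }

lemma bracket_succ_subset_summandOfFiltered (T : ModuleCat.{u} A) :
    ∀ n : ℕ, bracket A {T} (n + 1) ⊆ SummandOfFiltered (addClosure A {T}) (n + 1)
  | 0, M, hM => ⟨M, Filtered.of_mem (fun _ _ => mem_addClosure_of_subsingleton) one_pos hM,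
      IsSummand.refl M⟩
  | n + 1, M, ⟨k, f, hf, hM⟩ => by
    have hext : ∀ j, ∃ E ∈ Filtered (addClosure A {T}) (n + 2), IsSummand A (f j) E := fun j => by
      obtain ⟨C', hC', D, hD, h⟩ := hf j
      obtain ⟨V, hV, hDV⟩ := bracket_succ_subset_summandOfFiltered T n hD
      obtain ⟨E, hfE, hE⟩ := h.exists_isSummand (IsSummand.refl C') hDV
      exact ⟨E, ⟨C', hC', V, hV, hE⟩, hfE⟩
    choose E hE hfE using hext
    exact ⟨_, Filtered.pi pi_mem_addClosure_singleton hE, hM.trans (IsSummand.pi hfE)⟩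

lemma summandOfFiltered_succ_subset_bracket (T : Set (ModuleCat.{u} A)) :
    ∀ n : ℕ, SummandOfFiltered (addClosure A T) (n + 1) ⊆ bracket A T (n + 1)
  | 0, _, ⟨_, ⟨C', hC', V, (hV : Subsingleton V), h⟩, hM⟩ => by
    obtain ⟨e⟩ := h.nonempty_linearEquiv_of_subsingleton_right
    exact (hM.trans (IsSummand.of_linearEquiv e.symm)).mem_addClosure hC'
  | n + 1, _, ⟨W, ⟨C', hC', V, hV, h⟩, hM⟩ =>
    mem_addClosure_of_isSummand
      ⟨C', hC', V, summandOfFiltered_succ_subset_bracket T n ⟨V, hV, IsSummand.refl V⟩, h⟩ hM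

lemma bracket_eq_summandOfFiltered (T : ModuleCat.{u} A) {n : ℕ} (hn : 0 < n) :
    bracket A {T} n = SummandOfFiltered (addClosure A {T}) n := by
  obtain ⟨n, rfl⟩ := Nat.exists_eq_add_one.mpr hn
  exact (bracket_succ_subset_summandOfFiltered T n).antisymm
    (summandOfFiltered_succ_subset_bracket {T} n)

lemma self_mem_bracket (T : ModuleCat.{u} A) {n : ℕ} (hn : 0 < n) : T ∈ bracket A {T} n := by
  rw [bracket_eq_summandOfFiltered T hn]
  exact ⟨T, Filtered.of_mem (fun _ _ => mem_addClosure_of_subsingleton) hn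
    (mem_addClosure_of_isSummand rfl (IsSummand.refl T)), IsSummand.refl T⟩

namespace SummandOfFiltered

variable {T S : ModuleCat.{u} A} {a b : ℕ}

lemma of_linearEquiv {T' M M' : ModuleCat.{u} A} {n : ℕ} (eT : T ≃ₗ[A] T') (eM : M ≃ₗ[A] M')
    (hM : M ∈ SummandOfFiltered (addClosure A {T}) n) :
    M' ∈ SummandOfFiltered (addClosure A {T'}) n :=
  let ⟨W, hW, hMW⟩ := hM
  ⟨W, Filtered.mono (addClosure_singleton_subset_s3 eT) hW,
    (IsSummand.of_linearEquiv eM.symm).trans hMW⟩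

lemma of_filtered (hS : S ∈ SummandOfFiltered (addClosure A {T}) b) :
    ∀ {a : ℕ} {W : ModuleCat.{u} A}, W ∈ Filtered (addClosure A {S}) a →
      W ∈ SummandOfFiltered (addClosure A {T}) (a * b)
  | 0, W, hW => ⟨W, by rw [Nat.zero_mul]; exact hW, IsSummand.refl W⟩
  | a + 1, W, ⟨U, hU, W', hW', h⟩ => by
    obtain ⟨V, hV, hSV⟩ := hS
    obtain ⟨k, hUk⟩ := mem_addClosure_singleton.mp hU
    obtain ⟨G, hG, hW'G⟩ := of_filtered ⟨V, hV, hSV⟩ hW'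
    obtain ⟨W₂, hWW₂, h₂⟩ := h.exists_isSummand (hUk.trans (IsSummand.pi fun _ => hSV)) hW'G
    refine ⟨W₂, ?_, hWW₂⟩
    rw [Nat.succ_mul, add_comm]
    exact Filtered.of_ses h₂ (Filtered.pi pi_mem_addClosure_singleton fun _ => hV) hG

lemma trans (hS : S ∈ SummandOfFiltered (addClosure A {T}) b) {M : ModuleCat.{u} A}
    (hM : M ∈ SummandOfFiltered (addClosure A {S}) a) :
    M ∈ SummandOfFiltered (addClosure A {T}) (a * b) :=
  let ⟨_, hW, hMW⟩ := hM
  let ⟨W₂, hW₂, hWW₂⟩ := of_filtered hS hW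
  ⟨W₂, hW₂, hMW.trans hWW₂⟩

end SummandOfFiltered

lemma Filtered.exists_projective_ses {Y L PY : ModuleCat.{u} A} (hY : SES A L PY Y)
    [Module.Projective A PY] :
    ∀ {n : ℕ} {W : ModuleCat.{u} A}, W ∈ Filtered (addClosure A {Y}) n →
      ∃ W₂ Q Z : ModuleCat.{u} A, IsSummand A W W₂ ∧ Module.Projective A Q ∧
        SES A Z Q W₂ ∧ Z ∈ Filtered (addClosure A {L}) n
  | 0, W, (hW : Subsingleton W) =>
    ⟨W, ModuleCat.of A PUnit, ModuleCat.of A PUnit, IsSummand.refl W, inferInstance,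
      (ses_self _).of_linearEquiv (LinearEquiv.refl A _) (LinearEquiv.refl A _)
        (LinearEquiv.ofSubsingleton _ _), inferInstanceAs (Subsingleton PUnit)⟩
  | n + 1, W, ⟨U, hU, V, hV, h⟩ => by
    obtain ⟨k, hUk⟩ := mem_addClosure_singleton.mp hU
    obtain ⟨V₂, QV, ZV, hVV₂, hQV, hZV, hZV'⟩ := exists_projective_ses hY hV
    obtain ⟨W₂, hWW₂, h₂⟩ := h.exists_isSummand hUk hVV₂
    obtain ⟨Z, Q, hQ, hZ, hZ'⟩ := h₂.horseshoe (SES.pi fun _ : Fin k => hY) hZV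
    refine ⟨W₂, Q, Z, hWW₂, hQ, hZ, _, pi_mem_addClosure_singleton _ fun _ => ?_, ZV, hZV', hZ'⟩
    exact mem_addClosure_of_isSummand rfl (IsSummand.refl L)

namespace SummandOfFiltered

lemma syzygy {X Y K L : ModuleCat.{u} A} {n : ℕ} (hK : IsSyzygyOf A K X)
    (hL : IsSyzygyOf A L Y) (hX : X ∈ SummandOfFiltered (addClosure A {Y}) n) :
    K ∈ SummandOfFiltered (addClosure A {L}) n := by
  obtain ⟨PY, i, p, hPY, hi, hp, hip, -⟩ := hL
  obtain ⟨W, hW, hXW⟩ := hX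
  obtain ⟨W₂, Q, Z, hWW₂, hQ, hZ, hZ'⟩ := Filtered.exists_projective_ses ⟨i, p, hi, hp, hip⟩ hW
  exact ⟨Z, hZ', hK.isSummand_of_ses (hXW.trans hWW₂) hZ⟩

lemma iterSyzygy {n : ℕ} : ∀ (m : ℕ) {X Y K L : ModuleCat.{u} A}, IsIterSyzygyOf A m K X →
    IsIterSyzygyOf A m L Y → X ∈ SummandOfFiltered (addClosure A {Y}) n →
      K ∈ SummandOfFiltered (addClosure A {L}) n
  | 0, _, _, _, _, ⟨eK⟩, ⟨eL⟩, hX => of_linearEquiv eL.symm eK.symm hX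
  | m + 1, _, _, _, _, ⟨_, hK, hK'⟩, ⟨_, hL, hL'⟩, hX => syzygy hK' hL' (iterSyzygy m hK hL hX)

end SummandOfFiltered

variable (A)

theorem stmt3 (X Y : ModuleCat.{u} A)
    (n1 n2 : ℕ) (hn1 : 1 ≤ n1) (hn2 : 1 ≤ n2)
    (hXY : bracket A {X} n1 ⊆ bracket A {Y} n2)
    (m : ℕ) (K L : ModuleCat.{u} A)
    (hK : IsIterSyzygyOf A m K X) (hL : IsIterSyzygyOf A m L Y) :
    bracket A {K} n1 ⊆ bracket A {L} (n1 * n2) := by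
  have hX : X ∈ SummandOfFiltered (addClosure A {Y}) n2 := by
    rw [← bracket_eq_summandOfFiltered Y hn2]
    exact hXY (self_mem_bracket X hn1)
  rw [bracket_eq_summandOfFiltered K hn1, bracket_eq_summandOfFiltered L (Nat.mul_pos hn1 hn2)]
  exact fun M hM => SummandOfFiltered.trans (SummandOfFiltered.iterSyzygy m hK hL hX) hM

end Paper
end

section
/- Let A and B be separably equivalent Artin algebras. Then ed Ω^i(A-mod) = ed Ω^i(B-mod) for every i ∈ ℕ ∪ {∞}. -/
open CategoryTheory

universe u

namespace Paper

variable (A : Type u) [Ring A]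

/-- `F` is an exact functor: it preserves short exact sequences. -/
def ExactFunctor {B : Type u} [Ring B] (F : ModuleCat.{u} A ⥤ ModuleCat.{u} B) : Prop :=
  ∀ ⦃X Y Z : ModuleCat.{u} A⦄ (f : X ⟶ Y) (g : Y ⟶ Z),
    Function.Injective f → Function.Surjective g →
    LinearMap.range f.hom = LinearMap.ker g.hom →
    Function.Injective (F.map f) ∧ Function.Surjective (F.map g) ∧
      LinearMap.range (F.map f).hom = LinearMap.ker (F.map g).hom

/-- `A` and `B` are separably equivalent: there are additive exact functors
`F = M ⊗_A - : A-Mod → B-Mod` and `G = N ⊗_B - : B-Mod → A-Mod` (tensoring with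
bimodules which are projective on either side, hence exact, preserving finitely
generated and projective modules) such that `G ∘ F ≅ Id ⊕ (V ⊗ -)` and
`F ∘ G ≅ Id ⊕ (U ⊗ -)`. -/
def SeparablyEquivalent (B : Type u) [Ring B] : Prop :=
  ∃ (F : ModuleCat.{u} A ⥤ ModuleCat.{u} B) (G : ModuleCat.{u} B ⥤ ModuleCat.{u} A)
    (U : ModuleCat.{u} B ⥤ ModuleCat.{u} B) (V : ModuleCat.{u} A ⥤ ModuleCat.{u} A),
    F.Additive ∧ G.Additive ∧ ExactFunctor A F ∧ ExactFunctor B G ∧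
    (∀ X : ModuleCat.{u} A, Module.Finite A X → Module.Finite B (F.obj X)) ∧
    (∀ Y : ModuleCat.{u} B, Module.Finite B Y → Module.Finite A (G.obj Y)) ∧
    (∀ X : ModuleCat.{u} A, Module.Projective A X → Module.Projective B (F.obj X)) ∧
    (∀ Y : ModuleCat.{u} B, Module.Projective B Y → Module.Projective A (G.obj Y)) ∧
    (∀ Y : ModuleCat.{u} B,
      Nonempty ((F.obj (G.obj Y) : Type u) ≃ₗ[B] (↥Y × ↥(U.obj Y)))) ∧
    (∀ X : ModuleCat.{u} A,
      Nonempty ((G.obj (F.obj X) : Type u) ≃ₗ[A] (↥X × ↥(V.obj X))))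

/-! An exact additive functor preserves finite direct sums, summands, short exact sequences and
(under the hypotheses of separable equivalence) `Ωⁱ`; so `F` sends `[T]ₙ` into `[F T]ₙ` and `G`
sends `Ωⁱ(B-mod)` into `Ωⁱ(A-mod)`. If `Ωⁱ(A-mod) ⊆ [T]ₙ`, every `K ∈ Ωⁱ(B-mod)` is a summand
of `F (G K) ∈ [F T]ₙ`, so `ed Ωⁱ(B-mod) ≤ ed Ωⁱ(A-mod)`; equality follows by symmetry. -/

section Functoriality

variable {A} {B : Type u} [Ring B]

theorem SES.map {F : ModuleCat.{u} A ⥤ ModuleCat.{u} B} (hF : ExactFunctor A F)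
    {X Y Z : ModuleCat.{u} A} (h : SES A X Y Z) : SES B (F.obj X) (F.obj Y) (F.obj Z) := by
  obtain ⟨f, g, hf, hg, hfg⟩ := h
  obtain ⟨hFf, hFg, hFfg⟩ := hF (ModuleCat.ofHom f) (ModuleCat.ofHom g) hf hg hfg
  exact ⟨_, _, hFf, hFg, hFfg⟩

theorem IsSummand.trans_s18 {M X Y : ModuleCat.{u} A} (hMX : IsSummand A M X)
    (hXY : IsSummand A X Y) : IsSummand A M Y := by
  obtain ⟨i, r, hri⟩ := hMX
  obtain ⟨i', r', hri'⟩ := hXY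
  refine ⟨i' ∘ₗ i, r ∘ₗ r', ?_⟩
  rw [LinearMap.comp_assoc, ← LinearMap.comp_assoc i, hri', LinearMap.id_comp, hri]

theorem isSummand_of_iso {M X : ModuleCat.{u} A} (e : M ≅ X) : IsSummand A M X :=
  ⟨e.hom.hom, e.inv.hom, by rw [← ModuleCat.hom_comp, e.hom_inv_id, ModuleCat.hom_id]⟩

theorem isSummand_of_linearEquiv_prod {M X Y : ModuleCat.{u} A}
    (e : (X : Type u) ≃ₗ[A] (↥M × ↥Y)) : IsSummand A M X :=
  ⟨e.symm ∘ₗ LinearMap.inl A M Y, LinearMap.fst A M Y ∘ₗ e, by ext; simp⟩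

theorem IsSummand.map (F : ModuleCat.{u} A ⥤ ModuleCat.{u} B) {M X : ModuleCat.{u} A}
    (h : IsSummand A M X) : IsSummand B (F.obj M) (F.obj X) := by
  obtain ⟨i, r, hri⟩ := h
  refine ⟨(F.map (ModuleCat.ofHom i)).hom, (F.map (ModuleCat.ofHom r)).hom, ?_⟩
  rw [← ModuleCat.hom_comp, ← F.map_comp, ← ModuleCat.ofHom_comp, hri]
  exact congrArg ModuleCat.Hom.hom (F.map_id M)

/-- Finite products in `ModuleCat` are biproducts, which additive functors preserve. -/
noncomputable def mapPiIso (F : ModuleCat.{u} A ⥤ ModuleCat.{u} B) [F.Additive] {n : ℕ}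
    (f : Fin n → ModuleCat.{u} A) :
    F.obj (ModuleCat.of A (∀ j, f j)) ≅ ModuleCat.of B (∀ j, F.obj (f j)) :=
  F.mapIso (ModuleCat.biproductIsoPi f).symm ≪≫ F.mapBiproduct f ≪≫
    ModuleCat.biproductIsoPi (fun j => F.obj (f j))

theorem addClosure_of_isSummand {S : Set (ModuleCat.{u} A)} {M X : ModuleCat.{u} A}
    (h : IsSummand A M X) (hX : X ∈ addClosure A S) : M ∈ addClosure A S := by
  obtain ⟨n, f, hf, hsum⟩ := hX
  exact ⟨n, f, hf, h.trans_s18 hsum⟩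

theorem bracket_succ_of_isSummand {T : Set (ModuleCat.{u} A)} {n : ℕ} {M X : ModuleCat.{u} A}
    (h : IsSummand A M X) (hX : X ∈ bracket A T (n + 1)) : M ∈ bracket A T (n + 1) := by
  cases n <;> exact addClosure_of_isSummand h hX

theorem addClosure_map (F : ModuleCat.{u} A ⥤ ModuleCat.{u} B) [F.Additive]
    {S : Set (ModuleCat.{u} A)} {S' : Set (ModuleCat.{u} B)} (hS : ∀ X ∈ S, F.obj X ∈ S')
    {M : ModuleCat.{u} A} (hM : M ∈ addClosure A S) : F.obj M ∈ addClosure B S' := by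
  obtain ⟨n, f, hf, hsum⟩ := hM
  exact ⟨n, fun j => F.obj (f j), fun j => hS _ (hf j),
    (hsum.map F).trans_s18 (isSummand_of_iso (mapPiIso F f))⟩

theorem bracket_succ_map {F : ModuleCat.{u} A ⥤ ModuleCat.{u} B} [F.Additive]
    (hF : ExactFunctor A F) (T : ModuleCat.{u} A) (n : ℕ) {M : ModuleCat.{u} A}
    (hM : M ∈ bracket A {T} (n + 1)) : F.obj M ∈ bracket B {F.obj T} (n + 1) := by
  have hT : ∀ X ∈ ({T} : Set (ModuleCat.{u} A)), F.obj X ∈ ({F.obj T} : Set _) := by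
    rintro X rfl; rfl
  induction n generalizing M with
  | zero => exact addClosure_map F hT hM
  | succ n ih =>
    refine addClosure_map F ?_ hM
    rintro X ⟨C, hC, D, hD, hCXD⟩
    exact ⟨F.obj C, addClosure_map F hT hC, F.obj D, ih hD, hCXD.map hF⟩

theorem ed_le_of_isSummand_map {F : ModuleCat.{u} A ⥤ ModuleCat.{u} B}
    (G : ModuleCat.{u} B ⥤ ModuleCat.{u} A) [F.Additive] (hF : ExactFunctor A F)
    (hFfin : ∀ X : ModuleCat.{u} A, Module.Finite A X → Module.Finite B (F.obj X))
    {CA : Set (ModuleCat.{u} A)} {CB : Set (ModuleCat.{u} B)} (hG : ∀ K ∈ CB, G.obj K ∈ CA)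
    (hFG : ∀ K ∈ CB, IsSummand B K (F.obj (G.obj K))) :
    ed B CB ≤ ed A CA := by
  refine sInf_le_sInf ?_
  rintro _ ⟨m, rfl, T, hT, hCA⟩
  exact ⟨m, rfl, F.obj T, hFfin T hT, fun K hK =>
    bracket_succ_of_isSummand (hFG K hK) (bracket_succ_map hF T m (hCA (hG K hK)))⟩

theorem SyzCat.map {F : ModuleCat.{u} A ⥤ ModuleCat.{u} B} (hF : ExactFunctor A F)
    (hFfin : ∀ X : ModuleCat.{u} A, Module.Finite A X → Module.Finite B (F.obj X))
    (hFproj : ∀ X : ModuleCat.{u} A, Module.Projective A X → Module.Projective B (F.obj X))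
    (i : ℕ) {K : ModuleCat.{u} A} (hK : K ∈ SyzCat A i) :
    F.obj K ∈ SyzCat B i := by
  obtain ⟨hK, Ks, P, rfl, hKs, hP, hses⟩ := hK
  exact ⟨hFfin _ hK, fun j => F.obj (Ks j), fun j => F.obj (P j), rfl,
    fun j => hFfin _ (hKs j), fun j => ⟨hFfin _ (hP j).1, hFproj _ (hP j).2⟩,
    fun j => (hses j).map hF⟩

theorem InfSyzCat.map {F : ModuleCat.{u} A ⥤ ModuleCat.{u} B} (hF : ExactFunctor A F)
    (hFfin : ∀ X : ModuleCat.{u} A, Module.Finite A X → Module.Finite B (F.obj X))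
    (hFproj : ∀ X : ModuleCat.{u} A, Module.Projective A X → Module.Projective B (F.obj X))
    {K : ModuleCat.{u} A} (hK : K ∈ InfSyzCat A) :
    F.obj K ∈ InfSyzCat B := by
  obtain ⟨hK, Ks, P, rfl, hKs, hP, hses⟩ := hK
  exact ⟨hFfin _ hK, fun j => F.obj (Ks j), fun j => F.obj (P j), rfl,
    fun j => hFfin _ (hKs j), fun j => ⟨hFfin _ (hP j).1, hFproj _ (hP j).2⟩,
    fun j => (hses j).map hF⟩

end Functoriality

section SeparablyEquivalent

variable {A} {B : Type u} [Ring B]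

theorem SeparablyEquivalent.symm (h : SeparablyEquivalent A B) : SeparablyEquivalent B A := by
  obtain ⟨F, G, U, V, hFa, hGa, hFe, hGe, hFf, hGf, hFp, hGp, hFG, hGF⟩ := h
  exact ⟨G, F, V, U, hGa, hFa, hGe, hFe, hGf, hFf, hGp, hFp, hGF, hFG⟩

theorem SeparablyEquivalent.ed_syzCat_le (h : SeparablyEquivalent A B) :
    (∀ i : ℕ, ed B (SyzCat B i) ≤ ed A (SyzCat A i)) ∧
      ed B (InfSyzCat B) ≤ ed A (InfSyzCat A) := by
  obtain ⟨F, G, U, -, hFa, -, hFe, hGe, hFf, hGf, -, hGp, hFG, -⟩ := h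
  have hK : ∀ K : ModuleCat.{u} B, IsSummand B K (F.obj (G.obj K)) := fun K =>
    isSummand_of_linearEquiv_prod (hFG K).some
  exact ⟨fun i => ed_le_of_isSummand_map G hFe hFf (fun K => SyzCat.map hGe hGf hGp i)
      (fun K _ => hK K),
    ed_le_of_isSummand_map G hFe hFf (fun K => InfSyzCat.map hGe hGf hGp) (fun K _ => hK K)⟩

end SeparablyEquivalent

theorem stmt18 (B : Type u) [Ring B] (h : SeparablyEquivalent A B) :
    (∀ i : ℕ, ed A (SyzCat A i) = ed B (SyzCat B i)) ∧
      ed A (InfSyzCat A) = ed B (InfSyzCat B) := by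
  obtain ⟨hBA, hBA'⟩ := h.ed_syzCat_le
  obtain ⟨hAB, hAB'⟩ := h.symm.ed_syzCat_le
  exact ⟨fun i => le_antisymm (hAB i) (hBA i), le_antisymm hAB' hBA'⟩

end Paper
end
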